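/- arXiv:0805.2205 — 2 statements merged into one kernel-verified Lean document; each statement's English description precedes it below -/
import Mathlib

section
/- Let n be a positive integer divisible by 8 and let C_1, C_2 be binary codes of length n with C_1 ⊆ C_2 ⊆ C_1^⊥, where C_1 is doubly even, contains the all-ones vector 𝟏, dim C_1 = k_1, and dim C_2 = k_1 + k_2. Let C' be a quaternary even code of length n containing 𝟏 with π(C') = C_1 and ι^{-1}(C') = C_2. Then the number of quaternary even codes C containing 𝟏 with C ⊆ C' and π(C) = ι^{-1}(C) = C_1 is exactly 2^{(k_1−1)k_2}. -/
open scoped BigOperators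

set_option maxHeartbeats 1000000

namespace Paper

/-- Self-orthogonality of a set of vectors w.r.t. the standard inner product. -/
def sorth {m : ℕ} {ι : Type} [Fintype ι] (S : Set (ι → ZMod m)) : Prop :=
  ∀ x ∈ S, ∀ y ∈ S, ∑ i, x i * y i = 0

/-- The dual (as a set) of a set of vectors w.r.t. the standard inner product. -/
def dualSet {m : ℕ} {ι : Type} [Fintype ι] (S : Set (ι → ZMod m)) : Set (ι → ZMod m) :=
  {x | ∀ y ∈ S, ∑ i, x i * y i = 0}

/-- A set of vectors is doubly even if every element has Hamming weight divisible by 4. -/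
def doublyEven {m : ℕ} {ι : Type} [Fintype ι] (S : Set (ι → ZMod m)) : Prop :=
  ∀ x ∈ S, 4 ∣ (Finset.univ.filter fun i => x i ≠ 0).card

/-- Coordinatewise reduction map `(Z_{p^2})^ι → (Z_p)^ι`. -/
def res (p : ℕ) [Fact p.Prime] {ι : Type} (v : ι → ZMod (p ^ 2)) : ι → ZMod p :=
  fun i => ZMod.castHom (dvd_pow_self p (by norm_num)) (ZMod p) (v i)

/-- The injection `(Z_p)^ι → (Z_{p^2})^ι` induced by `Z_p ≅ pZ_{p^2} ⊆ Z_{p^2}`. -/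
def iot (p : ℕ) {ι : Type} (v : ι → ZMod p) : ι → ZMod (p ^ 2) :=
  fun i => (p : ZMod (p ^ 2)) * (ZMod.cast (v i))

/-- Coordinatewise reduction map `(Z_4)^ι → (Z_2)^ι`. -/
def res4 {ι : Type} (v : ι → ZMod 4) : ι → ZMod 2 :=
  fun i => ZMod.castHom (by norm_num : (2:ℕ) ∣ 4) (ZMod 2) (v i)

/-- The injection `(Z_2)^ι → (Z_4)^ι`. -/
def iot4 {ι : Type} (v : ι → ZMod 2) : ι → ZMod 4 :=
  fun i => (2 : ZMod 4) * (ZMod.cast (v i))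

/-- Euclidean weight on `Z_4`. -/
def ewt (x : ZMod 4) : ℕ := if x = 0 then 0 else if x = 2 then 4 else 1

/-- A quaternary code is even if every codeword has Euclidean weight divisible by 8. -/
def evenCode {ι : Type} [Fintype ι] (S : Set (ι → ZMod 4)) : Prop :=
  ∀ x ∈ S, 8 ∣ ∑ i, ewt (x i)

/-- The code over `Z_q` generated by the rows of an integer matrix. -/
def intRowSpan (q : ℕ) {κ ι : Type} (G : Matrix κ ι ℤ) :
    Submodule (ZMod q) (ι → ZMod q) :=
  Submodule.span (ZMod q) (Set.range fun i => fun c => ((G i c : ℤ) : ZMod q))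

/-- The Gaussian binomial coefficient `[n choose k]_p`. -/
def gauss (p n k : ℕ) : ℚ :=
  ∏ i ∈ Finset.range k, ((p : ℚ) ^ n - (p : ℚ) ^ i) / ((p : ℚ) ^ k - (p : ℚ) ^ i)

end Paper

/-!
Write `M = C'` and `2 : M → M` for doubling. Since `2x = ι(π x)`, the image `2M` is `ι(C₁)` and
the kernel `M[2]` is `ι(C₂)`, of orders `2^k₁` and `2^(k₁+k₂)`. For `C ≤ M` one has `ι⁻¹(C) = C₁`
iff `C ⊓ M[2] = 2M`, and `π(C) = C₁` iff `C ⊔ M[2] = M`; evenness is inherited from `C'`. So the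
codes are the preimages of the complements of `W = M[2]/2M` in the `𝔽₂`-space `V = M/2M`
(`dim V = k₁ + k₂`, `dim W = k₂`) that contain the vector `𝟏 + 2M ∉ W`. The complements of `W`
containing a line `L` with `L ⊓ W = 0` are the kernels of the projections `V → W` vanishing on `L`,
a coset of `Hom(V/(W ⊕ L), W)`, which has `2^((k₁ - 1) k₂)` elements.
-/

open Module

namespace Submodule

section Complements

variable {k V : Type*} [Field k] [AddCommGroup V] [Module k V] (W L : Submodule k V)

theorem comp_coprod_subtype_eq_fst_iff (f : V →ₗ[k] W) :
    f ∘ₗ W.subtype.coprod L.subtype = LinearMap.fst k W L ↔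
      (∀ x : W, f x = x) ∧ ∀ y ∈ L, f y = 0 := by
  constructor
  · intro h
    exact ⟨fun x => by simpa using LinearMap.congr_fun h (x, 0),
      fun y hy => by simpa using LinearMap.congr_fun h (0, ⟨y, hy⟩)⟩
  · rintro ⟨hW, hL⟩
    ext x
    · simp [hW]
    · simp [hL x x.2]

theorem setOf_isCompl_le_eq_image_ker :
    {U | IsCompl W U ∧ L ≤ U} =
      LinearMap.ker '' {f : V →ₗ[k] W | f ∘ₗ W.subtype.coprod L.subtype = LinearMap.fst k W L} := by
  ext U
  simp only [Set.mem_ofPred_eq, Set.mem_image, comp_coprod_subtype_eq_fst_iff]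
  constructor
  · rintro ⟨hU, hLU⟩
    exact ⟨W.projectionOnto U hU, ⟨projectionOnto_apply_left hU,
      fun y hy => projectionOnto_apply_right hU ⟨y, hLU hy⟩⟩, ker_projectionOnto hU⟩
  · rintro ⟨f, ⟨hW, hL⟩, rfl⟩
    exact ⟨LinearMap.isCompl_of_proj hW, fun y hy => hL y hy⟩

theorem injOn_ker_setOf_comp_coprod_subtype_eq_fst :
    Set.InjOn LinearMap.ker
      {f : V →ₗ[k] W | f ∘ₗ W.subtype.coprod L.subtype = LinearMap.fst k W L} := by
  intro f hf g hg hfg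
  simp only [Set.mem_ofPred_eq, comp_coprod_subtype_eq_fst_iff] at hf hg
  rw [← LinearMap.projectionOnto_of_proj f hf.1, ← LinearMap.projectionOnto_of_proj g hg.1]
  congr

theorem ncard_setOf_isCompl_le [Finite k] [FiniteDimensional k V] (hWL : Disjoint W L) :
    {U | IsCompl W U ∧ L ≤ U}.ncard =
      Nat.card k ^ ((finrank k V - finrank k W - finrank k L) * finrank k W) := by
  set ρ := LinearMap.lcomp k W (W.subtype.coprod L.subtype)
  have hρ : Function.Surjective ρ := by
    have hinj : LinearMap.ker (W.subtype.coprod L.subtype) = ⊥ := by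
      rw [LinearMap.ker_coprod_of_disjoint_range _ _ (by rwa [range_subtype, range_subtype]),
        ker_subtype, ker_subtype, prod_bot]
    obtain ⟨j, hj⟩ := (W.subtype.coprod L.subtype).exists_leftInverse_of_injective hinj
    intro g
    exact ⟨g ∘ₗ j, by simp [ρ, LinearMap.lcomp_apply', LinearMap.comp_assoc, hj]⟩
  obtain ⟨f₀, hf₀⟩ := hρ (LinearMap.fst k W L)
  have hfiber : {f : V →ₗ[k] W | f ∘ₗ W.subtype.coprod L.subtype = LinearMap.fst k W L} =
      (f₀ + ·) '' (LinearMap.ker ρ : Set (V →ₗ[k] W)) := by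
    ext f
    refine ⟨fun hf => ⟨f - f₀, ?_, add_sub_cancel _ _⟩, ?_⟩
    · have hf' : ρ f = LinearMap.fst k W L := hf
      rw [SetLike.mem_coe, LinearMap.mem_ker, map_sub, hf', hf₀, sub_self]
    · rintro ⟨g, hg, rfl⟩
      show ρ (f₀ + g) = _
      rw [map_add, hf₀, LinearMap.mem_ker.mp hg, add_zero]
  have hker : finrank k (LinearMap.ker ρ) =
      (finrank k V - finrank k W - finrank k L) * finrank k W := by
    have := LinearMap.finrank_range_add_finrank_ker ρ
    rw [LinearMap.range_eq_top.mpr hρ, finrank_top, finrank_linearMap, finrank_linearMap,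
      finrank_prod] at this
    rw [Nat.sub_sub, Nat.sub_mul]
    omega
  rw [setOf_isCompl_le_eq_image_ker, (injOn_ker_setOf_comp_coprod_subtype_eq_fst W L).ncard_image,
    hfiber, Set.ncard_image_of_injective _ (add_right_injective f₀), ← hker,
    ← Nat.card_coe_set_eq]
  exact natCard_eq_pow_finrank (K := k) (V := LinearMap.ker ρ)

end Complements

-- `ZMod 4`-submodules and `ZMod 2`-subspaces of a group killed by `2` are both its subgroups.
theorem ncard_setOf_isCompl_mem_of_two_nsmul_eq_zero {V : Type*} [AddCommGroup V]
    [Module (ZMod 4) V] [Finite V] (hV : ∀ v : V, 2 • v = 0) {W : Submodule (ZMod 4) V} {x : V}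
    (hx : x ∉ W) {a b : ℕ} (ha : Nat.card V = 2 ^ a) (hb : Nat.card W = 2 ^ b) :
    {U | IsCompl W U ∧ x ∈ U}.ncard = 2 ^ ((a - b - 1) * b) := by
  let _ : Module (ZMod 2) V := AddCommGroup.zmodModule hV
  let e : Submodule (ZMod 2) V ≃o Submodule (ZMod 4) V :=
    (AddSubgroup.toZModSubmodule 2).symm.trans (AddSubgroup.toZModSubmodule 4)
  have hset : {U | IsCompl W U ∧ x ∈ U} =
      e '' {U | IsCompl (e.symm W) U ∧ (ZMod 2) ∙ x ≤ U} := by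
    ext U
    rw [e.image_eq_preimage_symm, Set.mem_preimage, Set.mem_ofPred_eq, Set.mem_ofPred_eq,
      ← e.symm.isCompl_iff, span_singleton_le_iff_mem]
    rfl
  have hx0 : x ≠ 0 := fun h => hx (h ▸ W.zero_mem)
  have hdimV : finrank (ZMod 2) V = a := by
    have hcard := natCard_eq_pow_finrank (K := ZMod 2) (V := V)
    rw [Nat.card_zmod] at hcard
    exact Nat.pow_right_injective le_rfl (hcard.symm.trans ha)
  have hdimW : finrank (ZMod 2) (e.symm W) = b := by
    have hcard := natCard_eq_pow_finrank (K := ZMod 2) (V := e.symm W)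
    rw [Nat.card_zmod] at hcard
    exact Nat.pow_right_injective le_rfl (hcard.symm.trans hb)
  rw [hset, Set.ncard_image_of_injective _ e.injective,
    ncard_setOf_isCompl_le _ _ ((disjoint_span_singleton' hx0).mpr hx),
    finrank_span_singleton hx0, Nat.card_zmod, hdimV, hdimW]

section Correspondence

variable {R M : Type*} [Ring R] [AddCommGroup M] [Module R M]

theorem isCompl_map_mkQ_iff {K T : Submodule R M} (hKT : K ≤ T) (U : Submodule R (M ⧸ K)) :
    IsCompl (T.map K.mkQ) U ↔ T ⊓ U.comap K.mkQ = K ∧ T ⊔ U.comap K.mkQ = ⊤ := by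
  have hinj := comap_injective_of_surjective K.mkQ_surjective
  have hT : (T.map K.mkQ).comap K.mkQ = T := by rw [comap_map_mkQ, sup_eq_right.mpr hKT]
  have hinf : T.map K.mkQ ⊓ U = ⊥ ↔ T ⊓ U.comap K.mkQ = K := by
    rw [← hinj.eq_iff, comap_inf, hT, comap_bot, ker_mkQ]
  have hsup : T.map K.mkQ ⊔ U = ⊤ ↔ T ⊔ U.comap K.mkQ = ⊤ := by
    rw [← hinj.eq_iff, comap_top]
    conv_lhs => rw [← map_comap_eq_of_surjective K.mkQ_surjective U, ← map_sup, comap_map_mkQ,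
      sup_eq_right.mpr (hKT.trans le_sup_left)]
  rw [isCompl_iff, disjoint_iff, codisjoint_iff, hinf, hsup]

theorem ncard_setOf_inf_eq_sup_eq_top {K T : Submodule R M} (hKT : K ≤ T)
    (P : Submodule R M → Prop) :
    {D | T ⊓ D = K ∧ T ⊔ D = ⊤ ∧ P D}.ncard =
      {U | IsCompl (T.map K.mkQ) U ∧ P (U.comap K.mkQ)}.ncard := by
  rw [← Set.ncard_image_of_injective _ (comap_injective_of_surjective K.mkQ_surjective)]
  congr 1
  ext D
  constructor
  · rintro ⟨hinf, hsup, hP⟩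
    have hD : (D.map K.mkQ).comap K.mkQ = D := by
      rw [comap_map_mkQ, sup_eq_right.mpr (hinf ▸ inf_le_right)]
    refine ⟨D.map K.mkQ, ?_, hD⟩
    rw [Set.mem_ofPred_eq, isCompl_map_mkQ_iff hKT, hD]
    exact ⟨⟨hinf, hsup⟩, hP⟩
  · rintro ⟨U, ⟨hU, hP⟩, rfl⟩
    exact ⟨((isCompl_map_mkQ_iff hKT U).mp hU).1, ((isCompl_map_mkQ_iff hKT U).mp hU).2, hP⟩

theorem ncard_eq_ncard_setOf_map_subtype_mem {N : Submodule R M} (S : Set (Submodule R M))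
    (hS : ∀ C ∈ S, C ≤ N) :
    S.ncard = {D : Submodule R N | D.map N.subtype ∈ S}.ncard := by
  rw [← Set.ncard_image_of_injective _ (map_injective_of_injective N.injective_subtype)]
  congr 1
  ext C
  refine ⟨fun hC => ?_, ?_⟩
  · have hmap : (C.comap N.subtype).map N.subtype = C := by
      rw [map_comap_subtype, inf_eq_right.mpr (hS C hC)]
    exact ⟨C.comap N.subtype, by rwa [Set.mem_ofPred_eq, hmap], hmap⟩
  · rintro ⟨D, hD, rfl⟩
    exact hD

end Correspondence

end Submodule

namespace LinearMap

variable {R M : Type*} [Ring R] [AddCommGroup M] [Module R M]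

theorem card_quotient_range [Finite M] (f : Module.End R M) :
    Nat.card (M ⧸ range f) = Nat.card (ker f) := by
  have hrange := (range f).card_eq_card_quotient_mul_card
  have hker := (ker f).card_eq_card_quotient_mul_card
  rw [Nat.card_congr f.quotKerEquivRange.toEquiv, mul_comm] at hker
  exact Nat.eq_of_mul_eq_mul_left Nat.card_pos (hrange.symm.trans hker)

theorem card_map_ker_mkQ_range_mul [Finite M] (f : Module.End R M) (hf : range f ≤ ker f) :
    Nat.card ((ker f).map (range f).mkQ) * Nat.card (range f) = Nat.card (ker f) := by
  have := Submodule.card_quotient_mul_card_quotient (ker f) (range f) hf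
  rwa [Nat.card_congr f.quotKerEquivRange.toEquiv, card_quotient_range] at this

theorem two_nsmul_quotient_range_two_eq_zero (v : M ⧸ range (2 : Module.End R M)) :
    2 • v = 0 := by
  induction v using Submodule.Quotient.induction_on with
  | H m =>
    rw [← Submodule.Quotient.mk_smul, Submodule.Quotient.mk_eq_zero]
    exact ⟨m, Module.End.ofNat_apply 2 m⟩

end LinearMap

namespace Paper

section Quaternary

variable {ι : Type}

theorem res4_sub (x y : ι → ZMod 4) : res4 (x - y) = res4 x - res4 y :=
  funext fun _ => map_sub _ _ _

theorem res4_add (x y : ι → ZMod 4) : res4 (x + y) = res4 x + res4 y :=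
  funext fun _ => map_add _ _ _

theorem iot4_zero : iot4 (0 : ι → ZMod 2) = 0 :=
  funext fun _ => by simp [iot4]

theorem iot4_injective : Function.Injective (iot4 (ι := ι)) := fun _ _ h =>
  funext fun i => (by decide : ∀ a b : ZMod 2, (2 : ZMod 4) * ZMod.cast a = 2 * ZMod.cast b → a = b)
    _ _ (congrFun h i)

theorem two_nsmul_eq_iot4_res4 (x : ι → ZMod 4) : 2 • x = iot4 (res4 x) :=
  funext fun i => (by decide : ∀ c : ZMod 4, 2 • c = 2 * ZMod.cast (ZMod.cast c : ZMod 2)) (x i)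

theorem two_nsmul_iot4 (z : ι → ZMod 2) : 2 • iot4 z = 0 :=
  funext fun i => (by decide : ∀ a : ZMod 2, 2 • ((2 : ZMod 4) * ZMod.cast a) = 0) (z i)

theorem two_nsmul_eq_zero_iff_res4_eq_zero (x : ι → ZMod 4) : 2 • x = 0 ↔ res4 x = 0 := by
  rw [two_nsmul_eq_iot4_res4, ← iot4_zero, iot4_injective.eq_iff]

theorem two_nsmul_eq_zero_iff_mem_range_iot4 (x : ι → ZMod 4) :
    2 • x = 0 ↔ x ∈ Set.range iot4 := by
  refine ⟨fun h => ⟨fun i => if x i = 2 then 1 else 0, funext fun i => ?_⟩, ?_⟩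
  · exact (by decide : ∀ c : ZMod 4, 2 • c = 0 →
      (2 : ZMod 4) * ZMod.cast (if c = 2 then (1 : ZMod 2) else 0) = c) (x i) (congrFun h i)
  · rintro ⟨z, rfl⟩
    exact two_nsmul_iot4 z

theorem range_two_le_ker_two {M : Type*} [AddCommGroup M] [Module (ZMod 4) M] :
    LinearMap.range (2 : Module.End (ZMod 4) M) ≤ LinearMap.ker (2 : Module.End (ZMod 4) M) := by
  rintro _ ⟨m, rfl⟩
  rw [LinearMap.mem_ker, Module.End.ofNat_apply, Module.End.ofNat_apply, smul_smul,
    ← Nat.cast_smul_eq_nsmul (ZMod 4)]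
  exact zero_smul _ m

variable {C1 C2 : Submodule (ZMod 2) (ι → ZMod 2)} {C' : Submodule (ZMod 4) (ι → ZMod 4)}

theorem mem_ker_two_iff (m : C') :
    m ∈ LinearMap.ker (2 : Module.End (ZMod 4) C') ↔ 2 • (m : ι → ZMod 4) = 0 := by
  rw [LinearMap.mem_ker, Module.End.ofNat_apply, ← Submodule.coe_eq_zero,
    Submodule.coe_smul_of_tower]

theorem val_image_ker_two (htor' : iot4 ⁻¹' (C' : Set (ι → ZMod 4)) = (C2 : Set (ι → ZMod 2))) :
    Subtype.val '' (LinearMap.ker (2 : Module.End (ZMod 4) C') : Set C') = iot4 '' C2 := by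
  ext x
  constructor
  · rintro ⟨m, hm, rfl⟩
    obtain ⟨z, hz⟩ := (two_nsmul_eq_zero_iff_mem_range_iot4 _).mp ((mem_ker_two_iff m).mp hm)
    refine ⟨z, ?_, hz⟩
    rw [← htor', Set.mem_preimage, hz]
    exact m.2
  · rintro ⟨z, hz, rfl⟩
    have hz' : iot4 z ∈ C' := by rwa [← SetLike.mem_coe, ← Set.mem_preimage, htor']
    exact ⟨⟨iot4 z, hz'⟩, (mem_ker_two_iff _).mpr (two_nsmul_iot4 z), rfl⟩

theorem val_image_range_two (hres' : res4 '' (C' : Set (ι → ZMod 4)) = (C1 : Set (ι → ZMod 2))) :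
    Subtype.val '' (LinearMap.range (2 : Module.End (ZMod 4) C') : Set C') = iot4 '' C1 := by
  ext x
  constructor
  · rintro ⟨_, ⟨m, rfl⟩, rfl⟩
    refine ⟨res4 m, ?_, (two_nsmul_eq_iot4_res4 _).symm⟩
    rw [← hres']
    exact ⟨m, m.2, rfl⟩
  · rintro ⟨z, hz, rfl⟩
    rw [← hres'] at hz
    obtain ⟨x, hx, rfl⟩ := hz
    exact ⟨(2 : Module.End (ZMod 4) C') ⟨x, hx⟩, ⟨_, rfl⟩, two_nsmul_eq_iot4_res4 x⟩

theorem natCard_eq_of_val_image_eq_iot4_image {P : Set C'} {S : Set (ι → ZMod 2)}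
    (h : Subtype.val '' P = iot4 '' S) : Nat.card P = Nat.card S := by
  rw [← Nat.card_image_of_injective Subtype.val_injective, h,
    Nat.card_image_of_injective iot4_injective]

theorem iot4_preimage_map_subtype_eq_iff
    (hres' : res4 '' (C' : Set (ι → ZMod 4)) = (C1 : Set (ι → ZMod 2)))
    (htor' : iot4 ⁻¹' (C' : Set (ι → ZMod 4)) = (C2 : Set (ι → ZMod 2)))
    (D : Submodule (ZMod 4) C') :
    iot4 ⁻¹' (D.map C'.subtype : Set (ι → ZMod 4)) = (C1 : Set (ι → ZMod 2)) ↔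
      LinearMap.ker (2 : Module.End (ZMod 4) C') ⊓ D =
        LinearMap.range (2 : Module.End (ZMod 4) C') := by
  have hT := val_image_ker_two htor'
  have hK := val_image_range_two hres'
  constructor
  · intro h
    ext m
    constructor
    · rintro ⟨hmT, hmD⟩
      obtain ⟨z, -, hz⟩ : (m : ι → ZMod 4) ∈ iot4 '' C2 := hT ▸ ⟨m, hmT, rfl⟩
      have hz1 : z ∈ (C1 : Set (ι → ZMod 2)) :=
        h ▸ (show iot4 z ∈ D.map C'.subtype from hz ▸ ⟨m, hmD, rfl⟩)
      obtain ⟨m', hm', hm'z⟩ :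
          iot4 z ∈ Subtype.val '' (LinearMap.range (2 : Module.End (ZMod 4) C') : Set C') :=
        hK ▸ ⟨z, hz1, rfl⟩
      rwa [← Subtype.ext (hm'z.trans hz)]
    · intro hmK
      obtain ⟨z, hz1, hz⟩ : (m : ι → ZMod 4) ∈ iot4 '' C1 := hK ▸ ⟨m, hmK, rfl⟩
      obtain ⟨m', hm'D, hm'⟩ : iot4 z ∈ D.map C'.subtype := (h ▸ hz1 : z ∈ iot4 ⁻¹' _)
      exact ⟨range_two_le_ker_two hmK, Subtype.ext (hm'.trans hz) ▸ hm'D⟩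
  · intro h
    ext z
    constructor
    · rintro ⟨m, hmD, hm⟩
      have hmT : m ∈ LinearMap.ker (2 : Module.End (ZMod 4) C') := by
        rw [mem_ker_two_iff, ← C'.subtype_apply, hm]
        exact two_nsmul_iot4 z
      obtain ⟨c, hc, hcm⟩ : (m : ι → ZMod 4) ∈ iot4 '' C1 := hK ▸ ⟨m, h ▸ ⟨hmT, hmD⟩, rfl⟩
      exact iot4_injective (hcm.trans hm) ▸ hc
    · intro hz
      obtain ⟨m, hmK, hm⟩ :
          iot4 z ∈ Subtype.val '' (LinearMap.range (2 : Module.End (ZMod 4) C') : Set C') :=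
        hK ▸ ⟨z, hz, rfl⟩
      exact ⟨m, (h ▸ hmK : m ∈ _ ⊓ D).2, hm⟩

theorem res4_image_map_subtype_eq_iff
    (hres' : res4 '' (C' : Set (ι → ZMod 4)) = (C1 : Set (ι → ZMod 2)))
    (D : Submodule (ZMod 4) C') :
    res4 '' (D.map C'.subtype : Set (ι → ZMod 4)) = (C1 : Set (ι → ZMod 2)) ↔
      LinearMap.ker (2 : Module.End (ZMod 4) C') ⊔ D = ⊤ := by
  constructor
  · intro h
    refine eq_top_iff.mpr fun m _ => ?_
    obtain ⟨_, ⟨d, hdD, rfl⟩, hd⟩ : res4 (m : ι → ZMod 4) ∈ res4 '' (D.map C'.subtype) :=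
      h ▸ hres' ▸ ⟨m, m.2, rfl⟩
    refine Submodule.mem_sup.mpr ⟨m - d, ?_, d, hdD, sub_add_cancel m d⟩
    rw [mem_ker_two_iff, two_nsmul_eq_zero_iff_res4_eq_zero, Submodule.coe_sub, res4_sub, ← hd,
      C'.subtype_apply, sub_self]
  · intro h
    rw [← hres']
    ext v
    constructor
    · rintro ⟨_, ⟨d, -, rfl⟩, rfl⟩
      exact ⟨d, d.2, rfl⟩
    · rintro ⟨x, hx, rfl⟩
      obtain ⟨t, ht, d, hd, htd⟩ :=
        Submodule.mem_sup.mp (h ▸ Submodule.mem_top : (⟨x, hx⟩ : C') ∈ LinearMap.ker 2 ⊔ D)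
      rw [mem_ker_two_iff, two_nsmul_eq_zero_iff_res4_eq_zero] at ht
      refine ⟨d, ⟨d, hd, rfl⟩, ?_⟩
      rw [← zero_add (res4 _), ← ht, ← res4_add, ← Submodule.coe_add, htd]

theorem ncard_codes_eq_ncard_isCompl [Fintype ι]
    (hev' : evenCode (C' : Set (ι → ZMod 4))) (hone' : (fun _ => (1 : ZMod 4)) ∈ C')
    (hres' : res4 '' (C' : Set (ι → ZMod 4)) = (C1 : Set (ι → ZMod 2)))
    (htor' : iot4 ⁻¹' (C' : Set (ι → ZMod 4)) = (C2 : Set (ι → ZMod 2))) :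
    {C : Submodule (ZMod 4) (ι → ZMod 4) |
        evenCode (C : Set (ι → ZMod 4)) ∧ (fun _ => (1 : ZMod 4)) ∈ C ∧ C ≤ C' ∧
        res4 '' (C : Set (ι → ZMod 4)) = (C1 : Set (ι → ZMod 2)) ∧
        iot4 ⁻¹' (C : Set (ι → ZMod 4)) = (C1 : Set (ι → ZMod 2))}.ncard =
      {U : Submodule (ZMod 4) (C' ⧸ LinearMap.range (2 : Module.End (ZMod 4) C')) |
        IsCompl ((LinearMap.ker (2 : Module.End (ZMod 4) C')).map (LinearMap.range 2).mkQ) U ∧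
        (LinearMap.range (2 : Module.End (ZMod 4) C')).mkQ ⟨_, hone'⟩ ∈ U}.ncard := by
  rw [Submodule.ncard_eq_ncard_setOf_map_subtype_mem _ fun C hC => hC.2.2.1]
  refine Eq.trans ?_ (Submodule.ncard_setOf_inf_eq_sup_eq_top range_two_le_ker_two
    fun D : Submodule (ZMod 4) C' => (⟨_, hone'⟩ : C') ∈ D)
  congr 1
  ext D
  have heven : evenCode (D.map C'.subtype : Set (ι → ZMod 4)) :=
    fun x hx => hev' x (Submodule.map_subtype_le _ D hx)
  have hone : (fun _ => (1 : ZMod 4)) ∈ D.map C'.subtype ↔ ⟨_, hone'⟩ ∈ D := by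
    simp [hone']
  simp only [Set.mem_ofPred_eq, iot4_preimage_map_subtype_eq_iff hres' htor',
    res4_image_map_subtype_eq_iff hres', hone, Submodule.map_subtype_le]
  tauto

end Quaternary

theorem mkQ_one_notMem_map_ker_two {n : ℕ} (hn : 0 < n)
    {C' : Submodule (ZMod 4) (Fin n → ZMod 4)} (hone' : (fun _ => (1 : ZMod 4)) ∈ C') :
    (LinearMap.range (2 : Module.End (ZMod 4) C')).mkQ ⟨_, hone'⟩ ∉
      (LinearMap.ker (2 : Module.End (ZMod 4) C')).map (LinearMap.range 2).mkQ := by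
  rw [← Submodule.mem_comap, Submodule.comap_map_mkQ, sup_eq_right.mpr range_two_le_ker_two,
    mem_ker_two_iff]
  have h21 : 2 • (1 : ZMod 4) ≠ 0 := by decide
  exact fun h => h21 (congrFun h ⟨0, hn⟩)

theorem stmt13_general (n k1 k2 : ℕ) (hn : 0 < n)
    (C1 C2 : Submodule (ZMod 2) (Fin n → ZMod 2))
    (hdim1 : Module.finrank (ZMod 2) C1 = k1)
    (hdim2 : Module.finrank (ZMod 2) C2 = k1 + k2)
    (C' : Submodule (ZMod 4) (Fin n → ZMod 4))
    (hev' : evenCode (C' : Set (Fin n → ZMod 4)))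
    (hone' : (fun _ => (1 : ZMod 4)) ∈ C')
    (hres' : res4 '' (C' : Set (Fin n → ZMod 4)) = (C1 : Set (Fin n → ZMod 2)))
    (htor' : iot4 ⁻¹' (C' : Set (Fin n → ZMod 4)) = (C2 : Set (Fin n → ZMod 2))) :
    {C : Submodule (ZMod 4) (Fin n → ZMod 4) |
        evenCode (C : Set (Fin n → ZMod 4)) ∧ (fun _ => (1 : ZMod 4)) ∈ C ∧ C ≤ C' ∧
        res4 '' (C : Set (Fin n → ZMod 4)) = (C1 : Set (Fin n → ZMod 2)) ∧
        iot4 ⁻¹' (C : Set (Fin n → ZMod 4)) = (C1 : Set (Fin n → ZMod 2))}.ncard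
      = 2 ^ ((k1 - 1) * k2) := by
  set f : Module.End (ZMod 4) C' := 2
  have hcard (S : Submodule (ZMod 2) (Fin n → ZMod 2)) {k : ℕ} (hk : finrank (ZMod 2) S = k) :
      Nat.card S = 2 ^ k := by
    rw [natCard_eq_pow_finrank (K := ZMod 2), Nat.card_zmod, hk]
  have hker : Nat.card (LinearMap.ker f) = 2 ^ (k1 + k2) :=
    (natCard_eq_of_val_image_eq_iot4_image (val_image_ker_two htor')).trans (hcard C2 hdim2)
  have hrange : Nat.card (LinearMap.range f) = 2 ^ k1 :=
    (natCard_eq_of_val_image_eq_iot4_image (val_image_range_two hres')).trans (hcard C1 hdim1)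
  have : Finite (C' ⧸ LinearMap.range f) := Finite.of_surjective _ (Submodule.mkQ_surjective _)
  rw [ncard_codes_eq_ncard_isCompl hev' hone' hres' htor',
    Submodule.ncard_setOf_isCompl_mem_of_two_nsmul_eq_zero
      LinearMap.two_nsmul_quotient_range_two_eq_zero (mkQ_one_notMem_map_ker_two hn hone')
      ((LinearMap.card_quotient_range f).trans hker) (b := k2)]
  · rw [Nat.add_sub_cancel]
  · refine Nat.eq_of_mul_eq_mul_right (pow_pos two_pos k1) ?_
    rw [← pow_add, add_comm k2, ← hrange, ← hker]
    exact LinearMap.card_map_ker_mkQ_range_mul f range_two_le_ker_two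

/-- with `C₁ ⊆ C₂ ⊆ C₁^⊥`, `C₁` doubly even containing `𝟏`, `dim C₁ = k₁`,
`dim C₂ = k₁ + k₂`, and `C'` a quaternary even code containing `𝟏` with `π(C') = C₁`,
`ι⁻¹(C') = C₂`, the number of quaternary even codes `C` containing `𝟏` with `C ⊆ C'` and
`π(C) = ι⁻¹(C) = C₁` is `2^{(k₁−1)k₂}`. -/
theorem stmt13 (n k1 k2 : ℕ) (hn8 : 8 ∣ n) (hn : 0 < n)
    (C1 C2 : Submodule (ZMod 2) (Fin n → ZMod 2))
    (h12 : C1 ≤ C2)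
    (h2d : (C2 : Set (Fin n → ZMod 2)) ⊆ dualSet (C1 : Set (Fin n → ZMod 2)))
    (hde : doublyEven (C1 : Set (Fin n → ZMod 2)))
    (hone1 : (fun _ => (1 : ZMod 2)) ∈ C1)
    (hdim1 : Module.finrank (ZMod 2) C1 = k1)
    (hdim2 : Module.finrank (ZMod 2) C2 = k1 + k2)
    (C' : Submodule (ZMod 4) (Fin n → ZMod 4))
    (hev' : evenCode (C' : Set (Fin n → ZMod 4)))
    (hone' : (fun _ => (1 : ZMod 4)) ∈ C')
    (hres' : res4 '' (C' : Set (Fin n → ZMod 4)) = (C1 : Set (Fin n → ZMod 2)))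
    (htor' : iot4 ⁻¹' (C' : Set (Fin n → ZMod 4)) = (C2 : Set (Fin n → ZMod 2))) :
    {C : Submodule (ZMod 4) (Fin n → ZMod 4) |
        evenCode (C : Set (Fin n → ZMod 4)) ∧ (fun _ => (1 : ZMod 4)) ∈ C ∧ C ≤ C' ∧
        res4 '' (C : Set (Fin n → ZMod 4)) = (C1 : Set (Fin n → ZMod 2)) ∧
        iot4 ⁻¹' (C : Set (Fin n → ZMod 4)) = (C1 : Set (Fin n → ZMod 2))}.ncard
      = 2 ^ ((k1 - 1) * k2) :=
  stmt13_general n k1 k2 hn C1 C2 hdim1 hdim2 C' hev' hone' hres' htor'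

end Paper
end

section
/- Let p be a prime and n a positive integer. The number of distinct self-dual codes of length n over Z_{p^2} equals the sum over 0 ≤ k_1 ≤ ⌊n/2⌋ of M_{p^2}(k_1, n−2k_1), where M_{p^2}(k_1, k_2) = σ_p(n,k_1) · [n−2k_1 choose k_2]_p · p^{k_1(2n−3k_1−1−2k_2)/2} for odd primes p, and M_4(k_1, k_2) = σ(n,k_1) · [n−2k_1 choose k_2]_2 · 2^{k_1(2n−3k_1+1−2k_2)/2} for p = 2; here σ_p(n,k_1) is the number of distinct self-orthogonal p-ary codes of length n and dimension k_1, and σ(n,k_1) is the number of distinct doubly even binary codes of length n and dimension k_1. -/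
/-!
Reduction modulo `p` sends a self-dual code `C` over `ℤ/p²` to a code `C₁` over `ℤ/p` that is
self-orthogonal (doubly even when `p = 2`), and `C` contains `p·C₁^⊥`. Conversely, fix a basis
`b₁, …, b_k` of such a `C₁` and write the Gram matrix of its canonical lifts as `p·H`. Every
self-dual code over `C₁` is generated by `p·C₁^⊥` and lifts `bᵢ + p·wᵢ`; the code so generated is
self-dual exactly when `H + X + Xᵀ = 0` for `X = (wᵢ · bⱼ)`, in which case it determines `X`. So the
self-dual codes over `C₁` are counted by the solutions `X`, of which there are
`p^(k choose 2)·#{a | 2a = 0}^k`: `p^(k(k-1)/2)` for odd `p`, and `2^(k(k+1)/2)` for `p = 2`,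
where double evenness makes the diagonal of `H` vanish. Summing over `C₁` by dimension gives the
formula, whose Gaussian factor `[n-2k, n-2k]_p` is `1`.
-/

open scoped BigOperators

set_option maxHeartbeats 1000000

namespace Paper

/-- `σ_p(n,k)`: the number of self-orthogonal codes of length `n` and dimension `k` over `Z_p`. -/
noncomputable def sigmaSO (p n k : ℕ) : ℕ :=
  {C : Submodule (ZMod p) (Fin n → ZMod p) |
    sorth (C : Set (Fin n → ZMod p)) ∧ Module.finrank (ZMod p) C = k}.ncard

/-- `σ(n,k)`: the number of doubly even binary codes of length `n` and dimension `k`. -/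
noncomputable def sigmaDE (n k : ℕ) : ℕ :=
  {C : Submodule (ZMod 2) (Fin n → ZMod 2) |
    doublyEven (C : Set (Fin n → ZMod 2)) ∧ Module.finrank (ZMod 2) C = k}.ncard

/-- `σ_𝟏(n,k)`: the number of doubly even binary codes of length `n` and dimension `k`
containing the all-ones vector. -/
noncomputable def sigmaOne (n k : ℕ) : ℕ :=
  {C : Submodule (ZMod 2) (Fin n → ZMod 2) |
    doublyEven (C : Set (Fin n → ZMod 2)) ∧ (fun _ => (1 : ZMod 2)) ∈ C ∧
    Module.finrank (ZMod 2) C = k}.ncard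

/-- `M_{p^2}(k₁,k₂)`: the mass formula value for self-orthogonal codes over `Z_{p^2}` of
type `{k₁,k₂}` and length `n`. -/
noncomputable def Mval (p n k1 k2 : ℕ) : ℚ :=
  if p = 2 then
    (sigmaDE n k1 : ℚ) * gauss 2 (n - 2 * k1) k2 * 2 ^ (k1 * (2 * n - 3 * k1 + 1 - 2 * k2) / 2)
  else
    (sigmaSO p n k1 : ℚ) * gauss p (n - 2 * k1) k2 *
      (p : ℚ) ^ (k1 * (2 * n - 3 * k1 - 1 - 2 * k2) / 2)

/-- `D_𝟏(k₁,k₂)`: the mass formula value for quaternary even codes of length `n`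
containing `𝟏`, of type `{k₁,k₂}`. -/
noncomputable def Done (n k1 k2 : ℕ) : ℚ :=
  (sigmaOne n k1 : ℚ) * gauss 2 (n - 2 * k1) k2 *
    2 ^ ((k1 - 1) * (2 * n - 3 * k1 - 2 - 2 * k2) / 2)

/-- `D(k₁,k₂)`: the mass formula value for quaternary even codes of length `n` containing an
element of `{±1}^n`, of type `{k₁,k₂}`. -/
noncomputable def Dpm (n k1 k2 : ℕ) : ℚ :=
  (sigmaOne n k1 : ℚ) * gauss 2 (n - 2 * k1) k2 *
    2 ^ ((n - k1 - k2) + (k1 - 1) * (2 * n - 3 * k1 - 2 - 2 * k2) / 2)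

open Module Matrix
open scoped Finset

section Orthogonal

variable {R : Type*} [CommRing R] {ι : Type*} [Fintype ι] [DecidableEq ι]

def orth (C : Submodule R (ι → R)) : Submodule R (ι → R) :=
  (C.map (dotProductEquiv R ι).toLinearMap).dualCoannihilator

theorem mem_orth {C : Submodule R (ι → R)} {x : ι → R} :
    x ∈ orth C ↔ ∀ y ∈ C, x ⬝ᵥ y = 0 := by
  simp only [orth, Submodule.mem_dualCoannihilator, Submodule.mem_map, LinearEquiv.coe_coe,
    forall_exists_index, and_imp, forall_apply_eq_imp_iff₂, dotProductEquiv_apply_apply]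
  exact forall₂_congr fun y _ => by rw [dotProduct_comm]

theorem mem_orth_span {S : Set (ι → R)} {x : ι → R} :
    x ∈ orth (Submodule.span R S) ↔ ∀ y ∈ S, x ⬝ᵥ y = 0 := by
  refine ⟨fun h y hy => mem_orth.1 h y (Submodule.subset_span hy), fun h => mem_orth.2 ?_⟩
  have : Submodule.span R S ≤ LinearMap.ker (dotProductEquiv R ι x) :=
    Submodule.span_le.2 fun y hy => by simpa using h y hy
  exact fun y hy => by simpa using this hy

theorem span_le_orth_span_iff {S : Set (ι → R)} :
    Submodule.span R S ≤ orth (Submodule.span R S) ↔ ∀ x ∈ S, ∀ y ∈ S, x ⬝ᵥ y = 0 := by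
  simp only [Submodule.span_le, Set.subset_def, SetLike.mem_coe, mem_orth_span]

theorem orth_anti {C D : Submodule R (ι → R)} (h : C ≤ D) : orth D ≤ orth C :=
  fun _ hx => mem_orth.2 fun y hy => mem_orth.1 hx y (h hy)

theorem le_orth_orth (C : Submodule R (ι → R)) : C ≤ orth (orth C) :=
  fun x hx => mem_orth.2 fun y hy => by rw [dotProduct_comm]; exact mem_orth.1 hy x hx

theorem coe_orth {m : ℕ} {ι : Type} [Fintype ι] [DecidableEq ι]
    (C : Submodule (ZMod m) (ι → ZMod m)) :
    (orth C : Set (ι → ZMod m)) = dualSet (C : Set (ι → ZMod m)) :=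
  Set.ext fun _ => mem_orth

theorem le_orth_iff_sorth {m : ℕ} {ι : Type} [Fintype ι] [DecidableEq ι]
    (C : Submodule (ZMod m) (ι → ZMod m)) : C ≤ orth C ↔ sorth (C : Set (ι → ZMod m)) :=
  forall₂_congr fun _ _ => mem_orth

variable {K : Type*} [Field K]

theorem finrank_add_finrank_orth (C : Submodule K (ι → K)) :
    finrank K C + finrank K (orth C) = Fintype.card ι := by
  have h := Subspace.finrank_add_finrank_dualCoannihilator_eq
    (C.map (dotProductEquiv K ι).toLinearMap)
  rwa [LinearEquiv.finrank_map_eq, Module.finrank_fintype_fun_eq_card] at h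

theorem orth_orth (C : Submodule K (ι → K)) : orth (orth C) = C := by
  have h₁ := finrank_add_finrank_orth C
  have h₂ := finrank_add_finrank_orth (orth C)
  exact (Submodule.eq_of_le_of_finrank_le (le_orth_orth C) (by omega)).symm

theorem two_mul_finrank_le_of_le_orth {C : Submodule K (ι → K)} (h : C ≤ orth C) :
    2 * finrank K C ≤ Fintype.card ι := by
  have := Submodule.finrank_mono h
  have := finrank_add_finrank_orth C
  omega

end Orthogonal

section ResidueRing

variable {p : ℕ}

abbrev red (p : ℕ) : ZMod (p ^ 2) →+* ZMod p :=
  ZMod.castHom (dvd_pow_self p two_ne_zero) (ZMod p)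

instance : RingHomSurjective (red p) := ⟨ZMod.castHom_surjective _⟩

theorem red_cast (a : ZMod p) : red p a.cast = a :=
  ZMod.ringHom_map_cast _ a

variable [Fact p.Prime]

theorem natCast_mul_eq_zero_iff (z : ZMod (p ^ 2)) : (p : ZMod (p ^ 2)) * z = 0 ↔ red p z = 0 := by
  have hdvd : p ^ 2 ∣ p * z.val ↔ p ∣ z.val := by
    simpa only [← sq] using Nat.mul_dvd_mul_iff_left (b := p) (c := z.val) (Fact.out : p.Prime).pos
  conv_lhs => rw [← ZMod.natCast_zmod_val z, ← Nat.cast_mul, ZMod.natCast_eq_zero_iff, hdvd]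
  rw [← ZMod.natCast_eq_zero_iff, ← ZMod.cast_eq_val, ZMod.castHom_apply]

theorem natCast_mul_congr {z z' : ZMod (p ^ 2)} (h : red p z = red p z') :
    (p : ZMod (p ^ 2)) * z = p * z' := by
  rw [← sub_eq_zero, ← mul_sub, natCast_mul_eq_zero_iff, map_sub, h, sub_self]

def iotHom (p : ℕ) [Fact p.Prime] : ZMod p →+ ZMod (p ^ 2) where
  toFun a := p * a.cast
  map_zero' := by simp
  map_add' a b := by
    rw [← mul_add]
    exact natCast_mul_congr (by simp only [map_add, red_cast])

theorem iotHom_apply (a : ZMod p) : iotHom p a = p * a.cast := rfl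

theorem natCast_mul_eq_iotHom (z : ZMod (p ^ 2)) : (p : ZMod (p ^ 2)) * z = iotHom p (red p z) :=
  natCast_mul_congr (red_cast _).symm

theorem iotHom_mul (a : ZMod p) (z : ZMod (p ^ 2)) : iotHom p a * z = iotHom p (a * red p z) := by
  rw [iotHom_apply, mul_assoc, natCast_mul_eq_iotHom, map_mul, red_cast]

theorem red_iotHom (a : ZMod p) : red p (iotHom p a) = 0 := by
  rw [← natCast_mul_eq_zero_iff, iotHom_apply, ← mul_assoc, ← pow_two, ← Nat.cast_pow,
    ZMod.natCast_self, zero_mul]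

theorem iotHom_injective : Function.Injective (iotHom p) := by
  refine (injective_iff_map_eq_zero _).2 fun a ha => ?_
  rwa [iotHom_apply, natCast_mul_eq_zero_iff, red_cast] at ha

theorem exists_iotHom_eq {z : ZMod (p ^ 2)} (h : red p z = 0) : ∃ a, iotHom p a = z := by
  obtain ⟨m, hm⟩ : p ∣ z.val := by
    rwa [← ZMod.natCast_eq_zero_iff, ← ZMod.cast_eq_val, ← ZMod.castHom_apply]
  refine ⟨m, ?_⟩
  rw [iotHom_apply, natCast_mul_congr (z' := m) (by simp), ← Nat.cast_mul, ← hm,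
    ZMod.natCast_zmod_val]

end ResidueRing

section Vectors

variable {p : ℕ} {ι : Type}

def lift (v : ι → ZMod p) : ι → ZMod (p ^ 2) := fun i => (v i).cast

variable [Fact p.Prime]

def resₛₗ (p : ℕ) [Fact p.Prime] (ι : Type) : (ι → ZMod (p ^ 2)) →ₛₗ[red p] (ι → ZMod p) where
  toFun := res p
  map_add' x y := funext fun i => map_add (red p) (x i) (y i)
  map_smul' r x := funext fun i => map_mul (red p) r (x i)

@[simp]
theorem resₛₗ_apply (x : ι → ZMod (p ^ 2)) : resₛₗ p ι x = res p x := rfl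

theorem res_sub (x y : ι → ZMod (p ^ 2)) : res p (x - y) = res p x - res p y :=
  map_sub (resₛₗ p ι) x y

theorem res_lift (v : ι → ZMod p) : res p (lift v) = v :=
  funext fun i => red_cast (v i)

theorem iot_apply (w : ι → ZMod p) (i : ι) : iot p w i = iotHom p (w i) := rfl

theorem iot_zero : iot p (0 : ι → ZMod p) = 0 := funext fun _ => map_zero (iotHom p)

theorem iot_add (v w : ι → ZMod p) : iot p (v + w) = iot p v + iot p w :=
  funext fun i => map_add (iotHom p) (v i) (w i)

theorem iot_sub (v w : ι → ZMod p) : iot p (v - w) = iot p v - iot p w :=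
  funext fun i => map_sub (iotHom p) (v i) (w i)

theorem smul_iot (r : ZMod (p ^ 2)) (w : ι → ZMod p) : r • iot p w = iot p (red p r • w) :=
  funext fun i => by
    simp only [Pi.smul_apply, smul_eq_mul, iot_apply, mul_comm r, iotHom_mul, mul_comm (w i)]

theorem res_iot (w : ι → ZMod p) : res p (iot p w) = 0 :=
  funext fun i => red_iotHom (w i)

theorem exists_iot_eq {x : ι → ZMod (p ^ 2)} (h : res p x = 0) : ∃ w, iot p w = x := by
  choose w hw using fun i => exists_iotHom_eq (congrFun h i)
  exact ⟨w, funext hw⟩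

def resCode (C : Submodule (ZMod (p ^ 2)) (ι → ZMod (p ^ 2))) : Submodule (ZMod p) (ι → ZMod p) :=
  C.map (resₛₗ p ι)

def iotSub (D : Submodule (ZMod p) (ι → ZMod p)) : Submodule (ZMod (p ^ 2)) (ι → ZMod (p ^ 2)) where
  carrier := iot p '' D
  add_mem' := by
    rintro _ _ ⟨v, hv, rfl⟩ ⟨w, hw, rfl⟩
    exact ⟨v + w, D.add_mem hv hw, iot_add v w⟩
  zero_mem' := ⟨0, D.zero_mem, iot_zero⟩
  smul_mem' := by
    rintro r _ ⟨w, hw, rfl⟩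
    exact ⟨red p r • w, D.smul_mem _ hw, (smul_iot r w).symm⟩

variable [Fintype ι]

theorem red_dotProduct (x y : ι → ZMod (p ^ 2)) : red p (x ⬝ᵥ y) = res p x ⬝ᵥ res p y :=
  RingHom.map_dotProduct (red p) x y

theorem iot_dotProduct (w : ι → ZMod p) (y : ι → ZMod (p ^ 2)) :
    iot p w ⬝ᵥ y = iotHom p (w ⬝ᵥ res p y) := by
  simp only [dotProduct, map_sum, iot_apply, iotHom_mul]
  rfl

theorem dotProduct_iot (y : ι → ZMod (p ^ 2)) (w : ι → ZMod p) :
    y ⬝ᵥ iot p w = iotHom p (w ⬝ᵥ res p y) := by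
  rw [dotProduct_comm, iot_dotProduct]

theorem iot_dotProduct_iot (v w : ι → ZMod p) : iot p v ⬝ᵥ iot p w = 0 := by
  rw [iot_dotProduct, res_iot, dotProduct_zero, map_zero]

end Vectors

section SelfDual

variable {p : ℕ} [Fact p.Prime] {ι : Type} [Fintype ι] [DecidableEq ι]
  {C : Submodule (ZMod (p ^ 2)) (ι → ZMod (p ^ 2))}

theorem iot_mem_orth_iff {w : ι → ZMod p} : iot p w ∈ orth C ↔ w ∈ orth (resCode C) := by
  simp only [mem_orth, resCode, Submodule.mem_map, forall_exists_index, and_imp,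
    forall_apply_eq_imp_iff₂, resₛₗ_apply, iot_dotProduct, map_eq_zero_iff _ iotHom_injective]

theorem resCode_le_orth (hC : C ≤ orth C) : resCode C ≤ orth (resCode C) := by
  rintro _ ⟨x, hx, rfl⟩
  refine mem_orth.2 ?_
  rintro _ ⟨y, hy, rfl⟩
  rw [resₛₗ_apply, resₛₗ_apply, ← red_dotProduct, mem_orth.1 (hC hx) y hy, map_zero]

theorem iotSub_orth_resCode_le (hC : C = orth C) : iotSub (orth (resCode C)) ≤ C := by
  rintro _ ⟨w, hw, rfl⟩
  exact hC.ge (iot_mem_orth_iff.2 hw)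

/-- A vector orthogonal to `C` reduces into `(resCode C)^⊥⊥ = resCode C`, so it differs from a
codeword by an element of `iotSub (orth (resCode C))`. -/
theorem eq_orth_of_le (hC : C ≤ orth C) (hι : iotSub (orth (resCode C)) ≤ C) : C = orth C := by
  refine le_antisymm hC fun x hx => ?_
  have hres : res p x ∈ resCode C := by
    rw [← orth_orth (resCode C), mem_orth]
    intro v hv
    have h := mem_orth.1 hx _ (hι ⟨v, hv, rfl⟩)
    rwa [dotProduct_iot, map_eq_zero_iff _ iotHom_injective, dotProduct_comm] at h
  obtain ⟨s, hs, hsx⟩ := hres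
  obtain ⟨u, hu⟩ := exists_iot_eq (x := x - s) (by rw [res_sub, ← hsx, resₛₗ_apply, sub_self])
  have hu' : iot p u ∈ orth C := hu ▸ sub_mem hx (hC hs)
  simpa using add_mem (hu ▸ hι ⟨u, iot_mem_orth_iff.1 hu', rfl⟩ : x - s ∈ C) hs

theorem eq_orth_iff : C = orth C ↔ C ≤ orth C ∧ iotSub (orth (resCode C)) ≤ C :=
  ⟨fun h => ⟨h.le, iotSub_orth_resCode_le h⟩, fun h => eq_orth_of_le h.1 h.2⟩

end SelfDual

theorem exists_mul_transpose_eq {K : Type*} [Field K] {m n : Type*} [Fintype m]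
    [Fintype n] {b : Matrix m n K} (hb : LinearIndependent K b.row) (M : Matrix m m K) :
    ∃ w : Matrix m n K, w * bᵀ = M := by
  have hsurj : Function.Surjective b.mulVecLin := by
    rw [← LinearMap.range_eq_top]
    refine Submodule.eq_top_of_finrank_eq ?_
    rw [← Matrix.rank, hb.rank_matrix, Module.finrank_fintype_fun_eq_card]
  choose w hw using fun i => hsurj (M i)
  refine ⟨Matrix.of w, Matrix.ext fun i j => ?_⟩
  rw [Matrix.mul_apply', ← congrFun (hw i) j, Matrix.mulVecLin_apply, Matrix.mulVec,
    dotProduct_comm]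
  rfl

theorem mul_transpose_apply {R : Type*} [CommSemiring R] {m n : Type*} [Fintype n]
    (w b : Matrix m n R) (i j : m) : (w * bᵀ) i j = w i ⬝ᵥ b j :=
  rfl

theorem exists_matrix_basis {K : Type*} [Field K] {ι : Type*} [Fintype ι]
    (C : Submodule K (ι → K)) :
    ∃ b : Matrix (Fin (finrank K C)) ι K,
      Submodule.span K (Set.range b) = C ∧ LinearIndependent K b.row := by
  let B := Module.finBasis K C
  refine ⟨fun i => B i, ?_, B.linearIndependent.map' C.subtype C.ker_subtype⟩
  rw [show Set.range (fun i => (B i : ι → K)) = C.subtype '' Set.range B by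
      rw [← Set.range_comp]; rfl,
    ← Submodule.map_span, B.span_eq, Submodule.map_subtype_top]

theorem card_eq_of_surjective_of_ker_eq {α β γ : Type*} {f : α → β} {g : α → γ}
    (hf : Function.Surjective f) (hg : Function.Surjective g)
    (h : ∀ a a', f a = f a' ↔ g a = g a') : Nat.card β = Nat.card γ :=
  Nat.card_congr <| (Setoid.quotientKerEquivOfSurjective f hf).symm.trans <|
    (Quotient.congrRight h).trans (Setoid.quotientKerEquivOfSurjective g hg)

section LiftedCode

variable {p : ℕ} [Fact p.Prime] {ι : Type} {k : ℕ} {b : Matrix (Fin k) ι (ZMod p)}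

def liftGen (b w : Matrix (Fin k) ι (ZMod p)) (i : Fin k) : ι → ZMod (p ^ 2) :=
  lift (b i) + iot p (w i)

theorem res_liftGen (w : Matrix (Fin k) ι (ZMod p)) (i : Fin k) : res p (liftGen b w i) = b i := by
  rw [liftGen, ← resₛₗ_apply, map_add, resₛₗ_apply, resₛₗ_apply, res_lift, res_iot, add_zero]

variable [Fintype ι]

theorem liftGen_dotProduct_liftGen {H : Matrix (Fin k) (Fin k) (ZMod p)}
    (hH : ∀ i j, iotHom p (H i j) = lift (b i) ⬝ᵥ lift (b j)) (w : Matrix (Fin k) ι (ZMod p))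
    (i j : Fin k) :
    liftGen b w i ⬝ᵥ liftGen b w j = iotHom p ((H + w * bᵀ + (w * bᵀ)ᵀ) i j) := by
  simp only [liftGen, add_dotProduct, dotProduct_add, ← hH, iot_dotProduct, dotProduct_iot,
    res_lift, res_iot, dotProduct_zero, map_zero, add_zero, Matrix.add_apply,
    Matrix.transpose_apply, Matrix.mul_apply', map_add]

variable [DecidableEq ι] {C1 : Submodule (ZMod p) (ι → ZMod p)}

def liftedCode (C1 : Submodule (ZMod p) (ι → ZMod p)) (b w : Matrix (Fin k) ι (ZMod p)) :
    Submodule (ZMod (p ^ 2)) (ι → ZMod (p ^ 2)) :=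
  Submodule.span (ZMod (p ^ 2)) (Set.range (liftGen b w) ∪ iot p '' orth C1)

theorem liftGen_mem_liftedCode (w : Matrix (Fin k) ι (ZMod p)) (i : Fin k) :
    liftGen b w i ∈ liftedCode C1 b w :=
  Submodule.subset_span (Or.inl ⟨i, rfl⟩)

theorem iotSub_le_liftedCode (w : Matrix (Fin k) ι (ZMod p)) :
    iotSub (orth C1) ≤ liftedCode C1 b w :=
  fun _ hx => Submodule.subset_span (Or.inr hx)

theorem resCode_liftedCode (hb : Submodule.span (ZMod p) (Set.range b) = C1)
    (w : Matrix (Fin k) ι (ZMod p)) : resCode (liftedCode C1 b w) = C1 := by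
  refine le_antisymm ?_ ?_
  · rw [resCode, Submodule.map_le_iff_le_comap, liftedCode, Submodule.span_le]
    rintro _ (⟨i, rfl⟩ | ⟨v, -, rfl⟩)
    · simpa [res_liftGen] using hb ▸ Submodule.subset_span ⟨i, rfl⟩
    · simp [res_iot]
  · rw [← hb, Submodule.span_le]
    rintro _ ⟨i, rfl⟩
    exact ⟨_, liftGen_mem_liftedCode w i, res_liftGen w i⟩

theorem liftGen_dotProduct_iot (hbC : ∀ i, b i ∈ C1) (w : Matrix (Fin k) ι (ZMod p)) (i : Fin k)
    {v : ι → ZMod p} (hv : v ∈ orth C1) : liftGen b w i ⬝ᵥ iot p v = 0 := by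
  rw [dotProduct_iot, res_liftGen, mem_orth.1 hv _ (hbC i), map_zero]

theorem liftedCode_eq_orth_iff (hb : Submodule.span (ZMod p) (Set.range b) = C1)
    {H : Matrix (Fin k) (Fin k) (ZMod p)}
    (hH : ∀ i j, iotHom p (H i j) = lift (b i) ⬝ᵥ lift (b j)) (w : Matrix (Fin k) ι (ZMod p)) :
    liftedCode C1 b w = orth (liftedCode C1 b w) ↔ H + w * bᵀ + (w * bᵀ)ᵀ = 0 := by
  have hbC : ∀ i, b i ∈ C1 := fun i => hb ▸ Submodule.subset_span ⟨i, rfl⟩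
  rw [eq_orth_iff, resCode_liftedCode hb, and_iff_left (iotSub_le_liftedCode w), liftedCode,
    span_le_orth_span_iff]
  constructor
  · intro h
    ext i j
    apply iotHom_injective
    rw [← liftGen_dotProduct_liftGen hH, Matrix.zero_apply, map_zero]
    exact h _ (Or.inl ⟨i, rfl⟩) _ (Or.inl ⟨j, rfl⟩)
  · rintro h _ (⟨i, rfl⟩ | ⟨v, hv, rfl⟩) _ (⟨j, rfl⟩ | ⟨v', hv', rfl⟩)
    · rw [liftGen_dotProduct_liftGen hH, h, Matrix.zero_apply, map_zero]
    · exact liftGen_dotProduct_iot hbC w i hv'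
    · rw [dotProduct_comm]
      exact liftGen_dotProduct_iot hbC w j hv
    · exact iot_dotProduct_iot v v'

theorem exists_liftedCode_eq (hb : Submodule.span (ZMod p) (Set.range b) = C1)
    {C : Submodule (ZMod (p ^ 2)) (ι → ZMod (p ^ 2))} (hC : C = orth C) (hres : resCode C = C1) :
    ∃ w, liftedCode C1 b w = C := by
  have hlift : ∀ i, ∃ w : ι → ZMod p, lift (b i) + iot p w ∈ C := by
    intro i
    obtain ⟨y, hy, hyb⟩ : b i ∈ resCode C := hres ▸ hb ▸ Submodule.subset_span ⟨i, rfl⟩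
    obtain ⟨w, hw⟩ := exists_iot_eq (x := y - lift (b i))
      (by rw [res_sub, ← resₛₗ_apply, hyb, res_lift, sub_self])
    exact ⟨w, by rwa [hw, add_sub_cancel]⟩
  choose w hw using hlift
  have hle : liftedCode C1 (b := b) (Matrix.of w) ≤ C :=
    Submodule.span_le.2 <| Set.union_subset (Set.range_subset_iff.2 hw)
      (hres ▸ iotSub_orth_resCode_le hC)
  -- the self-dual code `liftedCode` inside the self-dual code `C` must be all of it
  have hL := eq_orth_of_le (hle.trans (hC.le.trans (orth_anti hle)))
    (by rw [resCode_liftedCode hb]; exact iotSub_le_liftedCode _)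
  exact ⟨Matrix.of w, le_antisymm hle (hC.le.trans ((orth_anti hle).trans hL.ge))⟩

theorem liftedCode_le_of_sub_mem {w w' : Matrix (Fin k) ι (ZMod p)}
    (h : ∀ i, w i - w' i ∈ orth C1) : liftedCode C1 b w ≤ liftedCode C1 b w' := by
  refine Submodule.span_le.2 (Set.union_subset (Set.range_subset_iff.2 fun i => ?_)
    fun _ hx => Submodule.subset_span (Or.inr hx))
  have : liftGen b w i = liftGen b w' i + iot p (w i - w' i) := by
    rw [liftGen, liftGen, iot_sub]; abel
  rw [SetLike.mem_coe, this]
  exact add_mem (liftGen_mem_liftedCode w' i) (iotSub_le_liftedCode w' ⟨_, h i, rfl⟩)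

theorem liftedCode_eq_iff (hb : Submodule.span (ZMod p) (Set.range b) = C1)
    {w w' : Matrix (Fin k) ι (ZMod p)}
    (hL : liftedCode C1 b w' = orth (liftedCode C1 b w')) :
    liftedCode C1 b w = liftedCode C1 b w' ↔ ∀ i, w i - w' i ∈ orth C1 := by
  refine ⟨fun h i => ?_, fun h => le_antisymm (liftedCode_le_of_sub_mem h)
    (liftedCode_le_of_sub_mem fun i => by simpa using neg_mem (h i))⟩
  have hmem : iot p (w i - w' i) ∈ liftedCode C1 b w' := by
    rw [iot_sub, show iot p (w i) - iot p (w' i) = liftGen b w i - liftGen b w' i by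
      simp only [liftGen]; abel]
    exact sub_mem (h ▸ liftGen_mem_liftedCode w i) (liftGen_mem_liftedCode w' i)
  rw [← resCode_liftedCode hb w', ← iot_mem_orth_iff]
  exact hL.le hmem

theorem mul_transpose_eq_iff {w w' : Matrix (Fin k) ι (ZMod p)} :
    w * bᵀ = w' * bᵀ ↔ ∀ i, w i - w' i ∈ orth (Submodule.span (ZMod p) (Set.range b)) := by
  simp only [mem_orth_span, ← Matrix.ext_iff, mul_transpose_apply, sub_dotProduct,
    sub_eq_zero]
  exact forall_congr' fun i =>
    (Set.forall_mem_range (f := b.row) (p := fun y => w i ⬝ᵥ y = w' i ⬝ᵥ y)).symm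

end LiftedCode

section Alternating

variable {R : Type*} [AddCommGroup R] {ι : Type*} [LinearOrder ι]

def skewSymmetricEquiv :
    {A : Matrix ι ι R // A + Aᵀ = 0} ≃ ({q : ι × ι // q.1 < q.2} → R) × (ι → {a : R // a + a = 0})
    where
  toFun A := (fun q => A.1 q.1.1 q.1.2, fun i => ⟨A.1 i i, congrFun (congrFun A.2 i) i⟩)
  invFun f := ⟨Matrix.of fun i j =>
      if h : i < j then f.1 ⟨(i, j), h⟩ else if h' : j < i then -f.1 ⟨(j, i), h'⟩ else f.2 i, by
    ext i j
    rcases lt_trichotomy i j with h | rfl | h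
    · simp [h, h.not_gt]
    · simpa using (f.2 i).2
    · simp [h, h.not_gt]⟩
  left_inv A := by
    ext i j
    have hA := congrFun (congrFun A.2 i) j
    rcases lt_trichotomy i j with h | rfl | h
    · simp [h]
    · simp
    · simp only [Matrix.add_apply, Matrix.transpose_apply, Matrix.zero_apply] at hA
      simp [h, h.not_gt, eq_neg_of_add_eq_zero_right hA]
  right_inv f := by
    ext q
    · simp [q.2]
    · simp

theorem card_add_add_transpose_eq_zero [Fintype ι] [Finite R] {H : Matrix ι ι R} (hH : Hᵀ = H)
    (hdiag : ∀ i, ∃ d, H i i = d + d) :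
    Nat.card {X : Matrix ι ι R // H + X + Xᵀ = 0} =
      Nat.card R ^ (Fintype.card ι).choose 2 * Nat.card {a : R // a + a = 0} ^ Fintype.card ι := by
  choose d hd using hdiag
  have hsymm : ∀ i j, H j i = H i j := fun i j => congrFun (congrFun hH i) j
  let X₀ : Matrix ι ι R := Matrix.of fun i j => if i < j then -H i j else if i = j then -d i else 0
  have hX₀ : H + X₀ + X₀ᵀ = 0 := by
    ext i j
    rcases lt_trichotomy i j with h | rfl | h
    · simp [X₀, h, h.not_gt, h.ne']
    · simp [X₀, hd]
    · simp [X₀, h, h.not_gt, h.ne', hsymm i j]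
  have hsol : ∀ X, H + X + Xᵀ = 0 ↔ (X - X₀) + (X - X₀)ᵀ = 0 := fun X => by
    rw [show (X - X₀) + (X - X₀)ᵀ = (H + X + Xᵀ) - (H + X₀ + X₀ᵀ) by
      rw [Matrix.transpose_sub]; abel, hX₀, sub_zero]
  rw [Nat.card_congr ((Equiv.subRight X₀).subtypeEquiv hsol |>.trans skewSymmetricEquiv),
    Nat.card_prod, Nat.card_fun, Nat.card_fun, Nat.card_eq_fintype_card (α := {q : ι × ι // _}),
    Fintype.card_subtype, ← Finset.univ_product_univ, Finset.card_product_filter_lt,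
    Finset.card_univ, Nat.card_eq_fintype_card (α := ι)]

end Alternating

section Fibres

variable {p : ℕ} [Fact p.Prime] {ι : Type} [Fintype ι] [DecidableEq ι]

def selfDualLifts (C1 : Submodule (ZMod p) (ι → ZMod p)) :
    Set (Submodule (ZMod (p ^ 2)) (ι → ZMod (p ^ 2))) :=
  {C | C = orth C ∧ resCode C = C1}

theorem card_selfDualLifts_eq_card_add_add_transpose_eq_zero {k : ℕ}
    {C1 : Submodule (ZMod p) (ι → ZMod p)} {b : Matrix (Fin k) ι (ZMod p)}
    (hb : Submodule.span (ZMod p) (Set.range b) = C1)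
    (hli : LinearIndependent (ZMod p) b.row) {H : Matrix (Fin k) (Fin k) (ZMod p)}
    (hH : ∀ i j, iotHom p (H i j) = lift (b i) ⬝ᵥ lift (b j)) :
    Nat.card (selfDualLifts C1) =
      Nat.card {X : Matrix (Fin k) (Fin k) (ZMod p) // H + X + Xᵀ = 0} := by
  let S := {w : Matrix (Fin k) ι (ZMod p) // H + w * bᵀ + (w * bᵀ)ᵀ = 0}
  let f : S → selfDualLifts C1 := fun w =>
    ⟨liftedCode C1 b w, (liftedCode_eq_orth_iff hb hH w).2 w.2, resCode_liftedCode hb w⟩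
  let g : S → {X : Matrix (Fin k) (Fin k) (ZMod p) // H + X + Xᵀ = 0} := fun w => ⟨w.1 * bᵀ, w.2⟩
  refine card_eq_of_surjective_of_ker_eq (f := f) (g := g) ?_ ?_ fun w w' => ?_
  · rintro ⟨C, hC, hres⟩
    obtain ⟨w, rfl⟩ := exists_liftedCode_eq hb hC hres
    exact ⟨⟨w, (liftedCode_eq_orth_iff hb hH w).1 hC⟩, rfl⟩
  · rintro ⟨X, hX⟩
    obtain ⟨w, rfl⟩ := exists_mul_transpose_eq hli X
    exact ⟨⟨w, hX⟩, rfl⟩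
  · rw [Subtype.ext_iff, Subtype.ext_iff]
    dsimp only [f, g]
    rw [liftedCode_eq_iff hb ((liftedCode_eq_orth_iff hb hH w').2 w'.2), mul_transpose_eq_iff, hb]

theorem card_selfDualLifts {C1 : Submodule (ZMod p) (ι → ZMod p)} (hC1 : C1 ≤ orth C1)
    (hdiag : ∀ v ∈ C1, ∃ d, lift v ⬝ᵥ lift v = iotHom p (d + d)) :
    Nat.card (selfDualLifts C1) =
      p ^ (finrank (ZMod p) C1).choose 2 *
        Nat.card {a : ZMod p // a + a = 0} ^ finrank (ZMod p) C1 := by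
  obtain ⟨b, hb, hli⟩ := exists_matrix_basis C1
  have hbC : ∀ i, b i ∈ C1 := fun i => hb ▸ Submodule.subset_span ⟨i, rfl⟩
  have hgram : ∀ i j, ∃ h, iotHom p h = lift (b i) ⬝ᵥ lift (b j) := fun i j =>
    exists_iotHom_eq <| by
      rw [red_dotProduct, res_lift, res_lift, mem_orth.1 (hC1 (hbC i)) _ (hbC j)]
  choose H hH using hgram
  have hsymm : (Matrix.of H)ᵀ = Matrix.of H :=
    Matrix.ext fun i j => iotHom_injective (by simp [hH, dotProduct_comm])
  have hdiag' : ∀ i, ∃ d, Matrix.of H i i = d + d := fun i => by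
    obtain ⟨d, hd⟩ := hdiag _ (hbC i)
    exact ⟨d, iotHom_injective (by rw [Matrix.of_apply, hH, hd])⟩
  rw [card_selfDualLifts_eq_card_add_add_transpose_eq_zero hb hli (H := Matrix.of H) hH,
    card_add_add_transpose_eq_zero hsymm hdiag', Nat.card_zmod, Fintype.card_fin]

end Fibres

section Counting

variable {p : ℕ} [Fact p.Prime] {ι : Type} [Fintype ι] [DecidableEq ι]

theorem ncard_selfDual_eq_sum (cond : Submodule (ZMod p) (ι → ZMod p) → Prop) (f : ℕ → ℕ)
    (hres : ∀ C, C = orth C → cond (resCode C)) (hcond : ∀ C1, cond C1 → C1 ≤ orth C1)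
    (hfib : ∀ C1, cond C1 → Nat.card (selfDualLifts C1) = f (finrank (ZMod p) C1)) :
    {C : Submodule (ZMod (p ^ 2)) (ι → ZMod (p ^ 2)) | C = orth C}.ncard =
      ∑ k ∈ Finset.range (Fintype.card ι / 2 + 1),
        {C1 : Submodule (ZMod p) (ι → ZMod p) | cond C1 ∧ finrank (ZMod p) C1 = k}.ncard * f k := by
  classical
  have := Fintype.ofFinite (Submodule (ZMod p) (ι → ZMod p))
  have := Fintype.ofFinite (Submodule (ZMod (p ^ 2)) (ι → ZMod (p ^ 2)))
  simp only [Set.ncard_eq_toFinset_card', Set.toFinset_ofPred]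
  have hfib' : ∀ C1 ∈ Finset.univ.filter cond,
      #{C ∈ Finset.univ.filter fun C => C = orth C | resCode C = C1} = f (finrank (ZMod p) C1) := by
    intro C1 hC1
    rw [← hfib C1 (Finset.mem_filter.1 hC1).2, Nat.card_coe_set_eq, ← Set.ncard_coe_finset]
    congr 1
    ext C
    simp [selfDualLifts]
  have hdim : ∀ C1 ∈ Finset.univ.filter cond,
      finrank (ZMod p) C1 ∈ Finset.range (Fintype.card ι / 2 + 1) := by
    intro C1 hC1
    have := two_mul_finrank_le_of_le_orth (hcond C1 (Finset.mem_filter.1 hC1).2)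
    rw [Finset.mem_range]
    omega
  rw [Finset.card_eq_sum_card_fiberwise (f := resCode) (t := Finset.univ.filter cond)
      fun C hC => by simpa using hres C (by simpa using hC),
    Finset.sum_congr rfl hfib', ← Finset.sum_fiberwise_of_maps_to hdim]
  refine Finset.sum_congr rfl fun k _ => ?_
  rw [Finset.sum_congr rfl fun C1 hC1 => by rw [(Finset.mem_filter.1 hC1).2], Finset.sum_const,
    smul_eq_mul, Finset.filter_filter]

end Counting

section Binary

variable {ι : Type} [Fintype ι]

theorem dotProduct_self_eq_card (x : ι → ZMod (2 ^ 2)) :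
    x ⬝ᵥ x = (#{i | res 2 x i ≠ 0} : ZMod (2 ^ 2)) := by
  rw [Finset.natCast_card_filter]
  exact Finset.sum_congr rfl fun i _ =>
    (by decide : ∀ z : ZMod (2 ^ 2), z * z = if red 2 z ≠ 0 then 1 else 0) (x i)

theorem lift_dotProduct_lift_self (v : ι → ZMod 2) :
    lift v ⬝ᵥ lift v = (#{i | v i ≠ 0} : ZMod (2 ^ 2)) := by
  rw [dotProduct_self_eq_card, res_lift]

theorem lift_dotProduct_lift_self_eq_zero {C1 : Submodule (ZMod 2) (ι → ZMod 2)}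
    (h : doublyEven (C1 : Set (ι → ZMod 2))) {v : ι → ZMod 2} (hv : v ∈ C1) :
    lift v ⬝ᵥ lift v = 0 := by
  rw [lift_dotProduct_lift_self, ZMod.natCast_eq_zero_iff]
  exact h v hv

theorem card_add_self_eq_zero_two : Nat.card {a : ZMod 2 // a + a = 0} = 2 := by
  rw [Nat.card_eq_fintype_card]
  rfl

variable [DecidableEq ι]

theorem doublyEven_resCode {C : Submodule (ZMod (2 ^ 2)) (ι → ZMod (2 ^ 2))} (hC : C ≤ orth C) :
    doublyEven (resCode C : Set (ι → ZMod 2)) := by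
  rintro _ ⟨x, hx, rfl⟩
  have h := mem_orth.1 (hC hx) x hx
  rwa [dotProduct_self_eq_card, ZMod.natCast_eq_zero_iff] at h

/-- Expanding `‖lift x + lift y‖²` modulo 4, where it equals `wt (x + y)`, shows that
`2 (x · y)` vanishes. -/
theorem le_orth_of_doublyEven {C1 : Submodule (ZMod 2) (ι → ZMod 2)}
    (h : doublyEven (C1 : Set (ι → ZMod 2))) : C1 ≤ orth C1 := by
  refine fun x hx => mem_orth.2 fun y hy => ?_
  have hxy : (lift x + lift y) ⬝ᵥ (lift x + lift y) = 0 := by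
    rw [dotProduct_self_eq_card, ← resₛₗ_apply, map_add, resₛₗ_apply, resₛₗ_apply, res_lift,
      res_lift, ← lift_dotProduct_lift_self]
    exact lift_dotProduct_lift_self_eq_zero h (add_mem hx hy)
  rw [add_dotProduct, dotProduct_add, dotProduct_add, lift_dotProduct_lift_self_eq_zero h hx,
    lift_dotProduct_lift_self_eq_zero h hy, dotProduct_comm (lift y), zero_add, add_zero,
    ← two_mul] at hxy
  have := (natCast_mul_eq_zero_iff (p := 2) _).1 (by exact_mod_cast hxy)
  rwa [red_dotProduct, res_lift, res_lift] at this

theorem card_selfDualLifts_of_doublyEven {C1 : Submodule (ZMod 2) (ι → ZMod 2)}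
    (h : doublyEven (C1 : Set (ι → ZMod 2))) :
    Nat.card (selfDualLifts C1) = 2 ^ (finrank (ZMod 2) C1).choose 2 * 2 ^ finrank (ZMod 2) C1 := by
  rw [card_selfDualLifts (le_orth_of_doublyEven h)
    fun v hv => ⟨0, by rw [lift_dotProduct_lift_self_eq_zero h hv, add_zero, map_zero]⟩,
    card_add_self_eq_zero_two]

end Binary

section OddPrime

variable {p : ℕ} [Fact p.Prime]

theorem two_ne_zero_of_ne_two (hp2 : p ≠ 2) : (2 : ZMod p) ≠ 0 :=
  Ring.two_ne_zero (by rwa [ZMod.ringChar_zmod_n])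

theorem card_add_self_eq_zero_of_ne_two (hp2 : p ≠ 2) :
    Nat.card {a : ZMod p // a + a = 0} = 1 := by
  refine Nat.card_eq_one_iff_exists.2 ⟨⟨0, add_zero 0⟩, fun a => Subtype.ext ?_⟩
  have h := a.2
  rw [← two_mul] at h
  exact (mul_eq_zero.1 h).resolve_left (two_ne_zero_of_ne_two hp2)

variable {ι : Type} [Fintype ι] [DecidableEq ι]

theorem exists_lift_dotProduct_lift_self (hp2 : p ≠ 2) {C1 : Submodule (ZMod p) (ι → ZMod p)}
    (hC1 : C1 ≤ orth C1) {v : ι → ZMod p} (hv : v ∈ C1) :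
    ∃ d, lift v ⬝ᵥ lift v = iotHom p (d + d) := by
  have : NeZero (2 : ZMod p) := ⟨two_ne_zero_of_ne_two hp2⟩
  obtain ⟨a, ha⟩ := exists_iotHom_eq (p := p) (z := lift v ⬝ᵥ lift v)
    (by rw [red_dotProduct, res_lift, mem_orth.1 (hC1 hv) v hv])
  exact ⟨a / 2, by rw [add_halves, ha]⟩

theorem card_selfDualLifts_of_ne_two (hp2 : p ≠ 2) {C1 : Submodule (ZMod p) (ι → ZMod p)}
    (hC1 : C1 ≤ orth C1) : Nat.card (selfDualLifts C1) = p ^ (finrank (ZMod p) C1).choose 2 := by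
  rw [card_selfDualLifts hC1 fun v hv => exists_lift_dotProduct_lift_self hp2 hC1 hv,
    card_add_self_eq_zero_of_ne_two hp2, one_pow, mul_one]

end OddPrime

theorem gauss_self {p : ℕ} (hp : 1 < p) (m : ℕ) : gauss p m m = 1 :=
  Finset.prod_eq_one fun i hi => div_self <| sub_ne_zero.2 <| ne_of_gt <|
    pow_lt_pow_right₀ (by exact_mod_cast hp) (Finset.mem_range.1 hi)

theorem Mval_of_ne_two {p n k : ℕ} (hp : 1 < p) (hp2 : p ≠ 2) (hk : 2 * k ≤ n) :
    Mval p n k (n - 2 * k) = sigmaSO p n k * (p : ℚ) ^ k.choose 2 := by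
  rw [Mval, if_neg hp2, gauss_self hp, mul_one, Nat.choose_two_right,
    show 2 * n - 3 * k - 1 - 2 * (n - 2 * k) = k - 1 by omega]

theorem Mval_two {n k : ℕ} (hk : 2 * k ≤ n) :
    Mval 2 n k (n - 2 * k) = sigmaDE n k * (2 ^ k.choose 2 * 2 ^ k) := by
  have h := Nat.triangle_succ k
  rw [Nat.add_sub_cancel, ← Nat.choose_two_right] at h
  rw [Mval, if_pos rfl, gauss_self one_lt_two, mul_one, ← pow_add,
    show 2 * n - 3 * k + 1 - 2 * (n - 2 * k) = k + 1 by omega, mul_comm k, ← h]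

theorem stmt17_general (p n : ℕ) [Fact p.Prime] :
    ({C : Submodule (ZMod (p ^ 2)) (Fin n → ZMod (p ^ 2)) |
        (C : Set (Fin n → ZMod (p ^ 2))) = dualSet (C : Set (Fin n → ZMod (p ^ 2)))}.ncard : ℚ)
      = ∑ k1 ∈ Finset.range (n / 2 + 1), Mval p n k1 (n - 2 * k1) := by
  simp only [← coe_orth, SetLike.coe_set_eq]
  have hk : ∀ k ∈ Finset.range (n / 2 + 1), 2 * k ≤ n := fun k hk => by
    rw [Finset.mem_range] at hk; omega
  rcases eq_or_ne p 2 with rfl | hp2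
  · rw [ncard_selfDual_eq_sum (fun C1 => doublyEven (C1 : Set (Fin n → ZMod 2)))
      (fun k => 2 ^ k.choose 2 * 2 ^ k) (fun C hC => doublyEven_resCode hC.le)
      (fun _ => le_orth_of_doublyEven) (fun _ => card_selfDualLifts_of_doublyEven),
      Fintype.card_fin]
    push_cast
    exact Finset.sum_congr rfl fun k hk' => (Mval_two (hk k hk')).symm
  · rw [ncard_selfDual_eq_sum (fun C1 => sorth (C1 : Set (Fin n → ZMod p)))
      (fun k => p ^ k.choose 2)
      (fun C hC => (le_orth_iff_sorth _).1 (resCode_le_orth hC.le))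
      (fun C1 => (le_orth_iff_sorth C1).2)
      (fun C1 h => card_selfDualLifts_of_ne_two hp2 ((le_orth_iff_sorth C1).2 h)),
      Fintype.card_fin]
    push_cast
    exact Finset.sum_congr rfl fun k hk' =>
      (Mval_of_ne_two (Fact.out : p.Prime).one_lt hp2 (hk k hk')).symm

/-- the number of self-dual codes of length `n` over `Z_{p^2}` is
`∑_{0 ≤ k₁ ≤ ⌊n/2⌋} M_{p^2}(k₁, n − 2k₁)`. -/
theorem stmt17 (p n : ℕ) [Fact p.Prime] (hn : 0 < n) :
    ({C : Submodule (ZMod (p ^ 2)) (Fin n → ZMod (p ^ 2)) |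
        (C : Set (Fin n → ZMod (p ^ 2))) = dualSet (C : Set (Fin n → ZMod (p ^ 2)))}.ncard : ℚ)
      = ∑ k1 ∈ Finset.range (n / 2 + 1), Mval p n k1 (n - 2 * k1) :=
  stmt17_general p n

end Paper
end
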